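/- arXiv:math/0510349 — 10 statements merged into one kernel-verified Lean document; each statement's English description precedes it below -/
import Mathlib

section
/- Let p be a prime, A a commutative ring, I ⊆ A an ideal, and r, s natural numbers with s ≤ p·r. Then the set W^{r,s}(I) = { x ∈ W(A) : the 0-th coefficient x_0 of x lies in I^r, and the i-th coefficient x_i lies in I^s for every i ≥ 1 } is an ideal of the ring W(A) of p-typical Witt vectors of A: it is an additive subgroup, and for every x ∈ W^{r,s}(I) and every y ∈ W(A), the product x·y lies in W^{r,s}(I). -/
set_option linter.unusedSectionVars false
set_option linter.unusedVariables false

open MvPolynomial Finset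

namespace StatementAux

variable {σ τ R S : Type*}

theorem hom_pow [CommSemiring R] {w : σ → ℕ} {φ : MvPolynomial σ R} {n : ℕ}
    (h : IsWeightedHomogeneous w φ n) (k : ℕ) :
    IsWeightedHomogeneous w (φ ^ k) (k * n) := by
  induction k with
  | zero => simpa using isWeightedHomogeneous_one R w
  | succ k ih =>
      rw [pow_succ, add_mul, one_mul]
      exact ih.mul h

theorem hom_sub [CommRing R] {w : σ → ℕ} {φ ψ : MvPolynomial σ R} {n : ℕ}
    (hφ : IsWeightedHomogeneous w φ n) (hψ : IsWeightedHomogeneous w ψ n) :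
    IsWeightedHomogeneous w (φ - ψ) n := by
  intro d hd
  rw [coeff_sub] at hd
  by_cases h : coeff d φ ≠ 0
  · exact hφ h
  · push_neg at h
    apply hψ
    intro h'
    simp [h, h'] at hd

theorem hom_bind₁ [CommSemiring R] (w : σ → ℕ) (w' : τ → ℕ) (c : ℕ)
    (f : σ → MvPolynomial τ R) (hf : ∀ i, IsWeightedHomogeneous w' (f i) (c * w i))
    {P : MvPolynomial σ R} {n : ℕ} (hP : IsWeightedHomogeneous w P n) :
    IsWeightedHomogeneous w' (bind₁ f P) (c * n) := by
  conv_lhs => rw [P.as_sum]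
  rw [map_sum]
  apply IsWeightedHomogeneous.sum
  intro m hm
  rw [bind₁_monomial]
  have hw : Finsupp.weight w m = n := hP (mem_support_iff.mp hm)
  have : IsWeightedHomogeneous w' (∏ i ∈ m.support, f i ^ m i)
      (∑ i ∈ m.support, m i * (c * w i)) :=
    IsWeightedHomogeneous.prod _ _ _ fun i _ => hom_pow (hf i) (m i)
  have h2 : (∑ i ∈ m.support, m i * (c * w i)) = c * n := by
    rw [← hw, Finsupp.weight_apply, Finsupp.sum, Finset.mul_sum]
    apply Finset.sum_congr rfl
    intro i _
    simp [smul_eq_mul]; ring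
  simpa [h2] using (isWeightedHomogeneous_C w' (_ : R)).mul this


theorem hom_map [CommSemiring R] [CommSemiring S] (f : R →+* S) {w : σ → ℕ}
    {φ : MvPolynomial σ R} {n : ℕ} (h : IsWeightedHomogeneous w φ n) :
    IsWeightedHomogeneous w (map f φ) n := by
  intro d hd
  apply h
  intro h0
  rw [coeff_map, h0, map_zero] at hd
  exact hd rfl

theorem hom_of_map [CommSemiring R] [CommSemiring S] (f : R →+* S)
    (hf : Function.Injective f) {w : σ → ℕ}
    {φ : MvPolynomial σ R} {n : ℕ} (h : IsWeightedHomogeneous w (map f φ) n) :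
    IsWeightedHomogeneous w φ n := by
  intro d hd
  apply h
  rw [coeff_map]
  intro h0
  exact hd (hf (h0.trans (map_zero f).symm))

variable (p : ℕ) [Fact p.Prime]

theorem hom_wittPolynomial_rename {idx : Type*} [CommRing R] (w : idx → ℕ) (b : idx) (k : ℕ) :
    IsWeightedHomogeneous (fun v : idx × ℕ => w v.1 * p ^ v.2)
      (rename (Prod.mk b) (wittPolynomial p R k)) (w b * p ^ k) := by
  rw [wittPolynomial, map_sum]
  apply IsWeightedHomogeneous.sum
  intro i hi
  rw [rename_monomial, Finsupp.mapDomain_single]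
  apply isWeightedHomogeneous_monomial
  rw [Finsupp.weight_apply, Finsupp.sum_single_index (by simp)]
  have : i ≤ k := Nat.lt_succ_iff.mp (Finset.mem_range.mp hi)
  simp only [smul_eq_mul]
  rw [← mul_assoc, mul_comm (p ^ (k - i)) (w b), mul_assoc, ← pow_add,
    Nat.sub_add_cancel this]

theorem hom_xInTermsOfW (n : ℕ) :
    IsWeightedHomogeneous (fun i : ℕ => p ^ i) (xInTermsOfW p ℚ n) (p ^ n) := by
  induction n using Nat.strong_induction_on with
  | _ n ih =>
    rw [xInTermsOfW_eq]
    have h1 : IsWeightedHomogeneous (fun i : ℕ => p ^ i)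
        ((X n : MvPolynomial ℕ ℚ) - ∑ i ∈ range n,
          C ((p : ℚ) ^ i) * xInTermsOfW p ℚ i ^ p ^ (n - i)) (p ^ n) := by
      apply hom_sub
      · exact isWeightedHomogeneous_X ℚ _ n
      · apply IsWeightedHomogeneous.sum
        intro i hi
        have hin : i < n := Finset.mem_range.mp hi
        have h2 : IsWeightedHomogeneous (fun i : ℕ => p ^ i)
            (xInTermsOfW p ℚ i ^ p ^ (n - i)) (p ^ (n - i) * p ^ i) :=
          hom_pow (ih i hin) _
        have h3 : p ^ (n - i) * p ^ i = p ^ n := by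
          rw [← pow_add, Nat.sub_add_cancel hin.le]
        rw [h3] at h2
        simpa using (isWeightedHomogeneous_C (fun i : ℕ => p ^ i) ((p : ℚ) ^ i)).mul h2
    simpa using h1.mul (isWeightedHomogeneous_C (fun i : ℕ => p ^ i) ((⅟(p:ℚ)) ^ n))


theorem hom_wittStructureRat {idx : Type*} (w : idx → ℕ) (Φ : MvPolynomial idx ℚ) (d n : ℕ)
    (hΦ : IsWeightedHomogeneous w Φ d) :
    IsWeightedHomogeneous (fun v : idx × ℕ => w v.1 * p ^ v.2)
      (wittStructureRat p Φ n) (d * p ^ n) := by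
  rw [wittStructureRat]
  apply hom_bind₁ (fun i : ℕ => p ^ i) _ d
  · intro k
    have := hom_bind₁ w (fun v : idx × ℕ => w v.1 * p ^ v.2) (p ^ k)
      (fun b => rename (Prod.mk b) (wittPolynomial p ℚ k))
      (fun b => by simpa [mul_comm] using hom_wittPolynomial_rename p (R := ℚ) w b k) hΦ
    rwa [mul_comm] at this
  · exact hom_xInTermsOfW p n

theorem hom_wittStructureInt {idx : Type*} (w : idx → ℕ) (Φ : MvPolynomial idx ℤ) (d n : ℕ)
    (hΦ : IsWeightedHomogeneous w Φ d) :
    IsWeightedHomogeneous (fun v : idx × ℕ => w v.1 * p ^ v.2)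
      (wittStructureInt p Φ n) (d * p ^ n) := by
  apply hom_of_map (Int.castRingHom ℚ) Int.cast_injective
  rw [map_wittStructureInt]
  exact hom_wittStructureRat p w _ d n (hom_map _ hΦ)

omit [Fact p.Prime]

theorem arith {σ : Type*} (r s : ℕ) (hs : s ≤ p * r) (m : σ →₀ ℕ) (w c : σ → ℕ)
    (hwc : ∀ v ∈ m.support, (w v = 1 → c v = r) ∧ (2 ≤ w v → c v = s))
    (hp : p ≤ ∑ v ∈ m.support, m v * w v) :
    s ≤ ∑ v ∈ m.support, c v * m v := by
  by_cases h : ∃ v ∈ m.support, 2 ≤ w v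
  · obtain ⟨v, hv, h2⟩ := h
    have hc : c v = s := (hwc v hv).2 h2
    have hm1 : 1 ≤ m v := Finsupp.mem_support_iff.mp hv |> Nat.one_le_iff_ne_zero.mpr
    calc s = c v * 1 := by rw [hc, mul_one]
      _ ≤ c v * m v := Nat.mul_le_mul_left _ hm1
      _ ≤ ∑ v ∈ m.support, c v * m v :=
        Finset.single_le_sum (f := fun v => c v * m v) (fun _ _ => Nat.zero_le _) hv
  · push_neg at h
    have key : ∀ v ∈ m.support, r * (m v * w v) ≤ c v * m v := by
      intro v hv
      have hw1 : w v ≤ 1 := Nat.lt_succ_iff.mp (h v hv)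
      interval_cases hwv : w v
      · simp
      · rw [(hwc v hv).1 hwv, mul_one, mul_comm]
    calc s ≤ p * r := hs
      _ = r * p := mul_comm _ _
      _ ≤ r * ∑ v ∈ m.support, m v * w v := Nat.mul_le_mul_left _ hp
      _ = ∑ v ∈ m.support, r * (m v * w v) := by rw [Finset.mul_sum]
      _ ≤ ∑ v ∈ m.support, c v * m v := Finset.sum_le_sum key

theorem eval_mem {A : Type*} [CommRing A] {σ : Type*} (I : Ideal A) (r s : ℕ)
    (hs : s ≤ p * r) (hp2 : 1 ≤ p)
    (P : MvPolynomial σ ℤ) (w : σ → ℕ) (f : σ → A) (n : ℕ) (hn : 1 ≤ n)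
    (hP : IsWeightedHomogeneous w P (p ^ n))
    (hf1 : ∀ v, w v = 1 → f v ∈ I ^ r) (hf2 : ∀ v, 2 ≤ w v → f v ∈ I ^ s) :
    aeval f P ∈ I ^ s := by
  have hsum : aeval f P = ∑ m ∈ P.support, aeval f (monomial m (coeff m P)) := by
    conv_lhs => rw [P.as_sum]
    rw [map_sum]
  rw [hsum]
  apply Submodule.sum_mem
  intro m hm
  rw [aeval_monomial]
  apply Ideal.mul_mem_left
  set c : σ → ℕ := fun v => if w v = 0 then 0 else if w v = 1 then r else s with hc
  have hfc : ∀ v, f v ∈ I ^ c v := by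
    intro v
    rcases Nat.lt_or_ge (w v) 2 with h2 | h2
    · interval_cases hwv : w v
      · simp [hc, hwv, Ideal.one_eq_top]
      · simpa [hc, hwv] using hf1 v hwv
    · have h0 : w v ≠ 0 := by omega
      have h1 : w v ≠ 1 := by omega
      simpa [hc, h0, h1] using hf2 v h2
  have hprod : (m.prod fun v k => f v ^ k) ∈ ∏ v ∈ m.support, I ^ (c v * m v) := by
    apply Ideal.prod_mem_prod
    intro v hv
    have := Ideal.pow_mem_pow (hfc v) (m v)
    rwa [← pow_mul] at this
  rw [Finset.prod_pow_eq_pow_sum] at hprod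
  refine Ideal.pow_le_pow_right ?_ hprod
  apply arith p r s hs m w c
  · intro v hv
    constructor
    · intro h1; simp [hc, h1]
    · intro h2
      have h0 : w v ≠ 0 := by omega
      have h1 : w v ≠ 1 := by omega
      simp [hc, h0, h1]
  · have hw : Finsupp.weight w m = p ^ n := hP (mem_support_iff.mp hm)
    have : ∑ v ∈ m.support, m v * w v = p ^ n := by
      rw [← hw, Finsupp.weight_apply, Finsupp.sum]
      exact Finset.sum_congr rfl fun v _ => by simp
    rw [this]
    exact Nat.le_self_pow (Nat.one_le_iff_ne_zero.mp hn) p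

end StatementAux


/-- **Lemma 2.5 (i), ideal statement.** For a prime `p`, a commutative ring `A`, an ideal
`I ⊆ A` and naturals `r, s` with `s ≤ p·r`, the set
`W^{r,s}(I) = { x ∈ W(A) : x₀ ∈ I^r and xᵢ ∈ I^s for i ≥ 1 }` is an ideal of the ring of
`p`-typical Witt vectors of `A`. -/
theorem statement2 (p : ℕ) [Fact p.Prime] (A : Type) [CommRing A] (I : Ideal A)
    (r s : ℕ) (hs : s ≤ p * r) :
    ∃ J : Ideal (WittVector p A), ∀ x : WittVector p A,
      x ∈ J ↔ (x.coeff 0 ∈ I ^ r ∧ ∀ i : ℕ, 1 ≤ i → x.coeff i ∈ I ^ s) := by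
  have hp1 : 1 ≤ p := (Fact.out : p.Prime).one_lt.le
  have hp2 : 2 ≤ p := (Fact.out : p.Prime).two_le
  refine ⟨{ carrier := {x : WittVector p A | x.coeff 0 ∈ I ^ r ∧ ∀ i : ℕ, 1 ≤ i → x.coeff i ∈ I ^ s}, zero_mem' := ?_, add_mem' := ?_, smul_mem' := ?_ }, fun x => Iff.rfl⟩
  · rintro a b ⟨ha0, ha⟩ ⟨hb0, hb⟩
    constructor
    · rw [WittVector.add_coeff_zero]
      exact add_mem ha0 hb0
    · intro i hi
      rw [WittVector.add_coeff, WittVector.peval]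
      have hom : IsWeightedHomogeneous (fun v : Fin 2 × ℕ => (fun _ : Fin 2 => 1) v.1 * p ^ v.2)
          (WittVector.wittAdd p i) (1 * p ^ i) :=
        StatementAux.hom_wittStructureInt p (fun _ : Fin 2 => 1) (X 0 + X 1) 1 i
          ((isWeightedHomogeneous_X ℤ _ 0).add (isWeightedHomogeneous_X ℤ _ 1))
      rw [one_mul] at hom
      apply StatementAux.eval_mem p I r s hs hp1 _ _ _ i hi hom
      · rintro ⟨c, j⟩ hj
        simp only [one_mul] at hj
        have hj0 : j = 0 := by
          by_contra h
          have := Nat.one_lt_pow h hp2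
          omega
        subst hj0
        fin_cases c
        · simpa [Function.uncurry] using ha0
        · simpa [Function.uncurry] using hb0
      · rintro ⟨c, j⟩ hj
        simp only [one_mul] at hj
        have hj1 : 1 ≤ j := by
          by_contra h
          push_neg at h
          interval_cases j
          simp at hj
        fin_cases c
        · simpa [Function.uncurry] using ha j hj1
        · simpa [Function.uncurry] using hb j hj1
  · constructor
    · simp [WittVector.zero_coeff]
    · intro i _; simp [WittVector.zero_coeff]
  · rintro c x ⟨hx0, hx⟩
    rw [smul_eq_mul]
    constructor
    · rw [WittVector.mul_coeff_zero]
      exact Ideal.mul_mem_left _ _ hx0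
    · intro i hi
      rw [WittVector.mul_coeff, WittVector.peval]
      set wΦ : Fin 2 → ℕ := fun b => if b = 1 then 1 else 0 with hwΦ
      have hom : IsWeightedHomogeneous (fun v : Fin 2 × ℕ => wΦ v.1 * p ^ v.2)
          (WittVector.wittMul p i) ((wΦ 0 + wΦ 1) * p ^ i) :=
        StatementAux.hom_wittStructureInt p wΦ (X 0 * X 1) _ i
          ((isWeightedHomogeneous_X ℤ _ 0).mul (isWeightedHomogeneous_X ℤ _ 1))
      have hw01 : wΦ 0 + wΦ 1 = 1 := by simp [hwΦ]
      rw [hw01, one_mul] at hom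
      apply StatementAux.eval_mem p I r s hs hp1 _ _ _ i hi hom
      · rintro ⟨b, j⟩ hj
        have hb1 : b = 1 := by
          by_contra h
          simp [hwΦ, h] at hj
        subst hb1
        simp only [hwΦ, if_pos rfl, one_mul] at hj
        have hj0 : j = 0 := by
          by_contra h
          have := Nat.one_lt_pow h hp2
          omega
        subst hj0
        simpa [Function.uncurry] using hx0
      · rintro ⟨b, j⟩ hj
        have hb1 : b = 1 := by
          by_contra h
          simp [hwΦ, h] at hj
        subst hb1
        simp only [hwΦ, if_pos rfl, one_mul] at hj
        have hj1 : 1 ≤ j := by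
          by_contra h
          push_neg at h
          interval_cases j
          simp at hj
        simpa [Function.uncurry] using hx j hj1
end

section
/- Let p be a prime, A a commutative ring, I ⊆ A an ideal, and r, s natural numbers with s ≤ p·r. Let W^{r,s}(I) = { x ∈ W(A) : x_0 ∈ I^r and x_i ∈ I^s for all i ≥ 1 }, and let W(I^s) = { x ∈ W(A) : x_i ∈ I^s for all i ≥ 0 }. Then: (a) the Verschiebung map V maps W(I^s) injectively into W^{r,s}(I); (b) the image of W(I^s) under V is exactly the set of x ∈ W^{r,s}(I) whose 0-th coefficient is 0; (c) the map sending x ∈ W^{r,s}(I) to its 0-th coefficient x_0 is a surjective additive map onto I^r. In other words, the sequence 0 → W(I^s) →(V) W^{r,s}(I) →(x ↦ x_0) I^r → 0 is a short exact sequence of abelian groups. -/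
/-- **Lemma 2.5 (i), exact sequence.** For a prime `p`, a commutative ring `A`, an ideal
`I ⊆ A` and naturals `r, s` with `s ≤ p·r`, the sequence
`0 → W(I^s) →(V) W^{r,s}(I) →(x ↦ x₀) I^r → 0` is a short exact sequence of abelian
groups: `V` maps `W(I^s)` injectively into `W^{r,s}(I)` with image exactly the elements of
`W^{r,s}(I)` with vanishing `0`-th coefficient, and `x ↦ x₀` is additive and surjective
onto `I^r`. -/
theorem statement3 (p : ℕ) [Fact p.Prime] (A : Type) [CommRing A] (I : Ideal A)
    (r s : ℕ) (hs : s ≤ p * r) :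
    -- (a) V maps W(I^s) into W^{r,s}(I), injectively
    (∀ x : WittVector p A, (∀ i : ℕ, x.coeff i ∈ I ^ s) →
        ((WittVector.verschiebung x).coeff 0 ∈ I ^ r ∧
          ∀ i : ℕ, 1 ≤ i → (WittVector.verschiebung x).coeff i ∈ I ^ s)) ∧
    Function.Injective (fun x : WittVector p A => WittVector.verschiebung x) ∧
    -- (b) the image of W(I^s) under V is the kernel of x ↦ x₀ on W^{r,s}(I)
    (∀ y : WittVector p A, (y.coeff 0 ∈ I ^ r ∧ ∀ i : ℕ, 1 ≤ i → y.coeff i ∈ I ^ s) →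
        (y.coeff 0 = 0 ↔
          ∃ x : WittVector p A, (∀ i : ℕ, x.coeff i ∈ I ^ s) ∧
            WittVector.verschiebung x = y)) ∧
    -- (c) x ↦ x₀ is additive and surjective from W^{r,s}(I) onto I^r
    (∀ x y : WittVector p A, (x + y).coeff 0 = x.coeff 0 + y.coeff 0) ∧
    (∀ a, a ∈ I ^ r → ∃ x : WittVector p A,
        (x.coeff 0 ∈ I ^ r ∧ ∀ i : ℕ, 1 ≤ i → x.coeff i ∈ I ^ s) ∧ x.coeff 0 = a) := by
  refine ⟨?_, ?_, ?_, WittVector.add_coeff_zero, ?_⟩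
  · intro x hx
    refine ⟨by simp [WittVector.verschiebung_coeff_zero], ?_⟩
    intro i hi
    obtain ⟨j, rfl⟩ := Nat.exists_eq_add_of_le hi
    simpa [Nat.add_comm, WittVector.verschiebung_coeff_succ] using hx j
  · intro x y h
    ext n
    have := congrArg (fun z : WittVector p A => z.coeff (n + 1)) h
    simpa [WittVector.verschiebung_coeff_succ] using this
  · intro y ⟨h0, hi⟩
    constructor
    · intro h0'
      refine ⟨WittVector.mk p fun i => y.coeff (i + 1), fun i => hi (i+1) (by omega), ?_⟩
      ext n
      cases n with
      | zero => simp [WittVector.verschiebung_coeff_zero, h0']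
      | succ n => simp [WittVector.verschiebung_coeff_succ, WittVector.coeff_mk]
    · rintro ⟨x, hx, rfl⟩
      simp [WittVector.verschiebung_coeff_zero]
  · intro a ha
    refine ⟨WittVector.mk p fun i => if i = 0 then a else 0, ⟨by simpa [WittVector.coeff_mk] using ha, ?_⟩, by simp [WittVector.coeff_mk]⟩
    intro i hi
    rw [WittVector.coeff_mk, if_neg (by omega)]; exact zero_mem _
end

section
/- Let p be a prime and i ≥ 0 an integer. Let S_i be the i-th universal addition polynomial for p-typical Witt vectors, i.e. the integral multivariate polynomial in the variables X_0, X_1, … and Y_0, Y_1, … such that the i-th coefficient of a sum of Witt vectors x + y equals S_i(x_0, x_1, …, y_0, y_1, …) (in Mathlib, S_i = wittAdd p i, a polynomial over ℤ in variables indexed by Fin 2 × ℕ). Then the two-variable polynomial S_i(X_0, 0, 0, …; Y_0, 0, 0, …) ∈ ℤ[X_0, Y_0], obtained from S_i by substituting 0 for all variables X_j and Y_j with j ≥ 1, is homogeneous of degree p^i. -/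
open MvPolynomial Finset

namespace StatementAux

variable {σ τ R S : Type*}

theorem iwh_prod [CommSemiring S] {w : τ → ℕ} {ι : Type*} (s : Finset ι)
    (f : ι → MvPolynomial τ S) (n : ι → ℕ)
    (h : ∀ i ∈ s, (f i).IsWeightedHomogeneous w (n i)) :
    (∏ i ∈ s, f i).IsWeightedHomogeneous w (∑ i ∈ s, n i) := by
  classical
  induction s using Finset.induction with
  | empty => simpa using isWeightedHomogeneous_one S w
  | @insert _ _ hx ih =>
    rw [Finset.prod_insert hx, Finset.sum_insert hx]
    exact (h _ (Finset.mem_insert_self _ _)).mul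
      (ih fun i hi => h i (Finset.mem_insert_of_mem hi))

theorem iwh_pow [CommSemiring S] {w : τ → ℕ} {φ : MvPolynomial τ S} {m : ℕ}
    (hφ : φ.IsWeightedHomogeneous w m) (k : ℕ) :
    (φ ^ k).IsWeightedHomogeneous w (m * k) := by
  induction k with
  | zero => simpa using isWeightedHomogeneous_one S w
  | succ k ih =>
    rw [pow_succ, mul_add, mul_one]
    exact ih.mul hφ

/-- Composition: substituting weighted-homogeneous polynomials into a
weighted-homogeneous polynomial. -/
theorem iwh_aeval [CommSemiring R] [CommSemiring S] [Algebra R S]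
    {w : σ → ℕ} {w' : τ → ℕ} {φ : MvPolynomial σ R} {m : ℕ}
    (hφ : φ.IsWeightedHomogeneous w m) (g : σ → MvPolynomial τ S)
    (hg : ∀ i, (g i).IsWeightedHomogeneous w' (w i)) :
    (aeval g φ).IsWeightedHomogeneous w' m := by
  classical
  rw [φ.as_sum, map_sum]
  refine IsWeightedHomogeneous.sum _ _ _ fun d hd => ?_
  rw [aeval_monomial]
  have hC : (algebraMap R (MvPolynomial τ S) (coeff d φ)).IsWeightedHomogeneous w' 0 := by
    show (C (algebraMap R S (coeff d φ)) : MvPolynomial τ S).IsWeightedHomogeneous w' 0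
    exact isWeightedHomogeneous_C _ _
  have hprod : (d.prod fun i k => g i ^ k).IsWeightedHomogeneous w'
      (∑ i ∈ d.support, w i * d i) := by
    rw [Finsupp.prod]
    exact iwh_prod _ _ _ fun i _ => iwh_pow (hg i) (d i)
  have hweight : (∑ i ∈ d.support, w i * d i) = m := by
    have := hφ (mem_support_iff.mp hd)
    rw [← this, Finsupp.weight_apply, Finsupp.sum]
    exact Finset.sum_congr rfl fun i _ => by simp [mul_comm]
  simpa [hweight] using hC.mul hprod

theorem iwh_of_map [CommSemiring R] [CommSemiring S] {f : R →+* S}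
    (hf : Function.Injective f) {w : σ → ℕ} {φ : MvPolynomial σ R} {m : ℕ}
    (h : (MvPolynomial.map f φ).IsWeightedHomogeneous w m) :
    φ.IsWeightedHomogeneous w m := by
  intro d hd
  apply h
  rw [coeff_map]
  exact fun h0 => hd (hf (by rw [h0, map_zero]))

theorem iwh_rename [CommSemiring S] {w : σ → ℕ} {w' : τ → ℕ} {φ : MvPolynomial σ S} {m : ℕ}
    (hφ : φ.IsWeightedHomogeneous w m) (f : σ → τ) (hf : ∀ i, w' (f i) = w i) :
    (rename f φ).IsWeightedHomogeneous w' m := by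
  have : (rename f φ : MvPolynomial τ S) = aeval (X ∘ f) φ := by
    rw [show (rename f : MvPolynomial σ S →ₐ[S] MvPolynomial τ S) = aeval (X ∘ f) from
      MvPolynomial.algHom_ext fun i => by simp]
  rw [this]
  exact iwh_aeval hφ _ fun i => by
    simpa [Function.comp, hf i] using isWeightedHomogeneous_X S w' (f i)

variable (p : ℕ) [Fact p.Prime]

theorem iwh_wittPolynomial (n : ℕ) :
    (wittPolynomial p ℚ n).IsWeightedHomogeneous (fun k => p ^ k) (p ^ n) := by
  rw [wittPolynomial]
  refine IsWeightedHomogeneous.sum _ _ _ fun i hi => ?_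
  refine isWeightedHomogeneous_monomial _ _ _ ?_
  rw [Finsupp.weight_apply, Finsupp.sum_single_index (by simp)]
  have hin : i ≤ n := Nat.lt_succ_iff.mp (mem_range.mp hi)
  simp only [smul_eq_mul]
  rw [← pow_add, Nat.sub_add_cancel hin]

theorem iwh_xInTermsOfW (n : ℕ) :
    (xInTermsOfW p ℚ n).IsWeightedHomogeneous (fun k => p ^ k) (p ^ n) := by
  induction n using Nat.strong_induction_on with
  | _ n ih =>
    rw [xInTermsOfW_eq]
    have h1 : ((X n : MvPolynomial ℕ ℚ) - ∑ i ∈ range n,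
        C ((p : ℚ) ^ i) * xInTermsOfW p ℚ i ^ p ^ (n - i)).IsWeightedHomogeneous
        (fun k => p ^ k) (p ^ n) := by
      rw [← mem_weightedHomogeneousSubmodule]
      refine Submodule.sub_mem _ ?_ ?_
      · simpa using isWeightedHomogeneous_X ℚ (fun k => p ^ k) n
      · rw [mem_weightedHomogeneousSubmodule]
        refine IsWeightedHomogeneous.sum _ _ _ fun i hi => ?_
        have hi' : i < n := mem_range.mp hi
        have := (isWeightedHomogeneous_C (fun k : ℕ => p ^ k) ((p : ℚ) ^ i)).mul
          (iwh_pow (ih i hi') (p ^ (n - i)))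
        simpa [← pow_add, Nat.add_sub_cancel' hi'.le] using this
    simpa using h1.mul (isWeightedHomogeneous_C _ _)

theorem iwh_wittAdd (n : ℕ) :
    (WittVector.wittAdd p n).IsWeightedHomogeneous
      (fun v : Fin 2 × ℕ => p ^ v.2) (p ^ n) := by
  apply iwh_of_map (f := Int.castRingHom ℚ) Int.cast_injective
  have : MvPolynomial.map (Int.castRingHom ℚ) (WittVector.wittAdd p n) =
      wittStructureRat p (X 0 + X 1) n := by
    rw [show WittVector.wittAdd p = wittStructureInt p (X 0 + X 1) from rfl]
    rw [map_wittStructureInt]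
    congr 1
    simp
  rw [this, wittStructureRat]
  refine iwh_aeval (w := fun k => p ^ k) (iwh_xInTermsOfW p n) _ fun k => ?_
  rw [map_add, bind₁_X_right, bind₁_X_right]
  exact IsWeightedHomogeneous.add
    (iwh_rename (iwh_wittPolynomial p k) _ fun i => rfl)
    (iwh_rename (iwh_wittPolynomial p k) _ fun i => rfl)

end StatementAux

/-- **Homogeneity of the Witt addition polynomial in the Teichmüller variables.**
Substituting `0` for all variables `X_j`, `Y_j` with `j ≥ 1` in the `i`-th universal
addition polynomial `S_i = wittAdd p i` for `p`-typical Witt vectors yields a polynomial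
in `ℤ[X₀, Y₀]` which is homogeneous of degree `p^i`. -/
theorem statement4 (p : ℕ) [Fact p.Prime] (i : ℕ) :
    (MvPolynomial.aeval
        (fun v : Fin 2 × ℕ =>
          if v.2 = 0 then (MvPolynomial.X v.1 : MvPolynomial (Fin 2) ℤ) else 0)
        (WittVector.wittAdd p i)).IsHomogeneous (p ^ i) := by
  show MvPolynomial.IsWeightedHomogeneous 1 _ (p ^ i)
  refine StatementAux.iwh_aeval (StatementAux.iwh_wittAdd p i) _ fun v => ?_
  rcases v with ⟨b, j⟩
  rcases j with _ | j
  · have h := MvPolynomial.isWeightedHomogeneous_X ℤ (1 : Fin 2 → ℕ) b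
    rw [Pi.one_apply] at h
    simpa using h
  · simp only [if_neg (Nat.succ_ne_zero j)]
    exact MvPolynomial.isWeightedHomogeneous_zero _ _ _
end

section
/- Let p be a prime, A a commutative ring, I ⊆ A an ideal, and r ≥ 1 an integer. For any a, a' ∈ I^r, there exists a Witt vector c ∈ W(A) all of whose coefficients lie in I^{p·r} such that τ(a) + τ(a') = τ(a + a') + V(c), where τ denotes the Teichmüller representative and V the Verschiebung. -/
open MvPolynomial Function

namespace Statement5Aux

variable (p : ℕ) [hp : Fact p.Prime]

lemma coeff_zero_eq_ghost {R : Type*} [CommRing R] (x : WittVector p R) :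
    x.coeff 0 = WittVector.ghostComponent 0 x := by
  rw [WittVector.ghostComponent_apply, wittPolynomial_zero, aeval_X]

lemma teich_mul_coeff_rat (σ : Type) (t : MvPolynomial σ ℚ)
    (x : WittVector p (MvPolynomial σ ℚ)) (n : ℕ) :
    (WittVector.teichmuller p t * x).coeff n = t ^ p ^ n * x.coeff n := by
  have key : WittVector.teichmuller p t * x
      = WittVector.mk p (fun n => t ^ p ^ n * x.coeff n) := by
    apply (WittVector.ghostMap.bijective_of_invertible p (MvPolynomial σ ℚ)).1
    funext n
    simp only [WittVector.ghostMap_apply, map_mul, WittVector.ghostComponent_teichmuller]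
    simp only [WittVector.ghostComponent_apply, aeval_wittPolynomial]
    rw [Finset.mul_sum]
    refine Finset.sum_congr rfl fun i hi => ?_
    have hi' : i ≤ n := Nat.lt_succ_iff.mp (Finset.mem_range.mp hi)
    rw [WittVector.coeff_mk, mul_pow, ← pow_mul, ← pow_add, Nat.add_sub_cancel' hi']
    ring
  rw [key, WittVector.coeff_mk]

lemma teich_mul_coeff_int (σ : Type) (t : MvPolynomial σ ℤ)
    (x : WittVector p (MvPolynomial σ ℤ)) (n : ℕ) :
    (WittVector.teichmuller p t * x).coeff n = t ^ p ^ n * x.coeff n := by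
  set f : MvPolynomial σ ℤ →+* MvPolynomial σ ℚ := MvPolynomial.map (Int.castRingHom ℚ) with hf
  have hinj : Function.Injective f := MvPolynomial.map_injective _ Int.cast_injective
  apply hinj
  calc f ((WittVector.teichmuller p t * x).coeff n)
      = (WittVector.map f (WittVector.teichmuller p t * x)).coeff n :=
        (WittVector.map_coeff f _ n).symm
    _ = (WittVector.teichmuller p (f t) * WittVector.map f x).coeff n := by
        rw [map_mul, WittVector.map_teichmuller]
    _ = f t ^ p ^ n * (WittVector.map f x).coeff n := teich_mul_coeff_rat p σ _ _ n
    _ = f (t ^ p ^ n * x.coeff n) := by rw [WittVector.map_coeff, map_mul, map_pow]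



noncomputable section

abbrev B := MvPolynomial (Fin 2) ℤ
abbrev C3 := MvPolynomial (Fin 3) ℤ

/-- the universal additivity defect -/
def d : WittVector p B :=
  WittVector.teichmuller p (X 0) + WittVector.teichmuller p (X 1)
    - WittVector.teichmuller p (X 0 + X 1)

def Ψ : B →ₐ[ℤ] C3 := aeval (fun i : Fin 2 => X 0 * X i.succ)

def ι : B →ₐ[ℤ] C3 := rename Fin.succ

def E : C3 ≃ₐ[ℤ] Polynomial B := finSuccEquiv ℤ 2

lemma d_coeff_zero : (d p).coeff 0 = 0 := by
  rw [coeff_zero_eq_ghost]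
  simp only [d, map_add, map_sub, WittVector.ghostComponent_teichmuller, pow_zero, pow_one]
  ring

lemma map_psi_d :
    WittVector.map (Ψ.toRingHom) (d p)
      = WittVector.teichmuller p (X 0 : C3) * WittVector.map (ι.toRingHom) (d p) := by
  simp only [d, map_add, map_sub, WittVector.map_teichmuller]
  have h0 : Ψ.toRingHom (X 0 : B) = X 0 * X ((0 : Fin 2).succ) := aeval_X _ 0
  have h1 : Ψ.toRingHom (X 1 : B) = X 0 * X ((1 : Fin 2).succ) := aeval_X _ 1
  have i0 : ι.toRingHom (X 0 : B) = X ((0 : Fin 2).succ) := rename_X _ 0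
  have i1 : ι.toRingHom (X 1 : B) = X ((1 : Fin 2).succ) := rename_X _ 1
  rw [h0, h1, i0, i1]
  rw [show (X 0 * X (Fin.succ 0) + X 0 * X (Fin.succ 1) : C3)
      = X 0 * (X (Fin.succ 0) + X (Fin.succ 1)) from (mul_add _ _ _).symm]
  rw [map_mul, map_mul, map_mul]
  ring

lemma psi_d_coeff (n : ℕ) :
    Ψ ((d p).coeff n) = (X 0 : C3) ^ p ^ n * ι ((d p).coeff n) := by
  have := congrArg (fun w : WittVector p C3 => w.coeff n) (map_psi_d p)
  simpa only [WittVector.map_coeff, teich_mul_coeff_int, AlgHom.toRingHom_eq_coe, RingHom.coe_coe] using this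

lemma E_iota (q : B) : E (ι q) = Polynomial.C q := by
  have : (E.toAlgHom.comp ι : B →ₐ[ℤ] Polynomial B)
      = (Polynomial.C : B →+* Polynomial B).toIntAlgHom := by
    apply MvPolynomial.algHom_ext
    intro i
    simp [E, ι, finSuccEquiv_X_succ]
    rfl
  exact congrFun (congrArg (fun f : B →ₐ[ℤ] Polynomial B => (f : B → Polynomial B)) this) q

lemma E_psi_coeff_mem (q : B) (k : ℕ) :
    (E (Ψ q)).coeff k ∈ (Ideal.span {(X 0 : B), X 1}) ^ k := by
  set J := Ideal.span {(X 0 : B), X 1} with hJ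
  induction q using MvPolynomial.induction_on generalizing k with
  | C a =>
      have : E (Ψ (C a)) = Polynomial.C (C a) := by
        simp [Ψ, E, aeval_C, algebraMap_eq]
      rw [this]
      cases k with
      | zero => rw [pow_zero, Ideal.one_eq_top]; exact Submodule.mem_top
      | succ k =>
          rw [Polynomial.coeff_C, if_neg (Nat.succ_ne_zero k)]
          exact Submodule.zero_mem _
  | add f g hf hg =>
      rw [map_add, map_add, Polynomial.coeff_add]
      exact Ideal.add_mem _ (hf k) (hg k)
  | mul_X f i hf =>
      have hXi : E (Ψ (X i)) = Polynomial.X * Polynomial.C (X i) := by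
        simp [Ψ, E, finSuccEquiv_X_zero, finSuccEquiv_X_succ]
      have hmem : (X i : B) ∈ J := by
        rw [hJ]; apply Ideal.subset_span; fin_cases i <;> simp
      rw [map_mul, map_mul, hXi, ← mul_assoc, mul_comm (E (Ψ f)) Polynomial.X, mul_assoc]
      cases k with
      | zero =>
          rw [pow_zero, Ideal.one_eq_top]; exact Submodule.mem_top
      | succ k =>
          rw [Polynomial.coeff_X_mul, Polynomial.coeff_mul_C, pow_succ]
          exact Ideal.mul_mem_mul (hf k) hmem


lemma d_coeff_mem (n : ℕ) (hn : 1 ≤ n) :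
    (d p).coeff n ∈ (Ideal.span {(X 0 : B), X 1}) ^ p := by
  have hE0 : E (X 0 : C3) = Polynomial.X := finSuccEquiv_X_zero
  have hq : E (Ψ ((d p).coeff n)) = Polynomial.X ^ p ^ n * Polynomial.C ((d p).coeff n) := by
    rw [psi_d_coeff, map_mul, map_pow, E_iota, hE0]
  have hcoeff : (d p).coeff n = (E (Ψ ((d p).coeff n))).coeff (p ^ n) := by
    rw [hq]
    have h := Polynomial.coeff_X_pow_mul (Polynomial.C ((d p).coeff n)) (p ^ n) 0
    rw [zero_add] at h
    rw [h, Polynomial.coeff_C_zero]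
  have hmem := E_psi_coeff_mem ((d p).coeff n) (p ^ n)
  rw [← hcoeff] at hmem
  exact Ideal.pow_le_pow_right (Nat.le_self_pow (Nat.one_le_iff_ne_zero.mp hn) p) hmem

end
end Statement5Aux

open Statement5Aux in
/-- **Additivity defect of Teichmüller representatives (proof of Lemma 2.5).**
For `a, a' ∈ I^r` (with `r ≥ 1`) there is a Witt vector `c` with all coefficients in
`I^{p·r}` such that `τ(a) + τ(a') = τ(a + a') + V(c)`. -/
theorem statement5 (p : ℕ) [Fact p.Prime] (A : Type) [CommRing A] (I : Ideal A)
    (r : ℕ) (hr : 1 ≤ r) (a a' : A) (ha : a ∈ I ^ r) (ha' : a' ∈ I ^ r) :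
    ∃ c : WittVector p A, (∀ i : ℕ, c.coeff i ∈ I ^ (p * r)) ∧
      WittVector.teichmuller p a + WittVector.teichmuller p a' =
        WittVector.teichmuller p (a + a') + WittVector.verschiebung c := by
  classical
  set φ : B →ₐ[ℤ] A := aeval (fun i : Fin 2 => if i = 0 then a else a') with hφ
  set J : Ideal B := Ideal.span {(X 0 : B), X 1} with hJ
  refine ⟨WittVector.mk p (fun i => φ ((d p).coeff (i + 1))), ?_, ?_⟩
  · intro i
    have h1 : (d p).coeff (i + 1) ∈ J ^ p :=
      d_coeff_mem p (i + 1) (Nat.succ_le_succ (Nat.zero_le i))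
    have h2 : φ ((d p).coeff (i + 1)) ∈ (Ideal.map φ.toRingHom J) ^ p := by
      have h := Ideal.mem_map_of_mem φ.toRingHom h1
      rwa [Ideal.map_pow] at h
    have h3 : Ideal.map φ.toRingHom J ≤ I ^ r := by
      rw [hJ, Ideal.map_span]
      refine Ideal.span_le.mpr ?_
      rintro x ⟨y, hy, rfl⟩
      simp only [Set.mem_insert_iff, Set.mem_singleton_iff] at hy
      rcases hy with rfl | rfl
      · simpa [φ] using ha
      · simpa [φ] using ha'
    have h4 : (Ideal.map φ.toRingHom J) ^ p ≤ I ^ (p * r) :=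
      le_trans (Ideal.pow_right_mono h3 p) (by rw [← pow_mul, mul_comm])
    exact h4 h2
  · have hmapd : WittVector.map φ.toRingHom (d p)
        = WittVector.teichmuller p a + WittVector.teichmuller p a'
          - WittVector.teichmuller p (a + a') := by
      simp only [d, map_add, map_sub, WittVector.map_teichmuller]
      simp [φ]
    have hV : WittVector.verschiebung (WittVector.mk p fun i => φ ((d p).coeff (i + 1)))
        = WittVector.map φ.toRingHom (d p) := by
      ext n
      cases n with
      | zero =>
          rw [WittVector.verschiebung_coeff_zero, WittVector.map_coeff, d_coeff_zero, map_zero]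
      | succ n =>
          rw [WittVector.verschiebung_coeff_succ, WittVector.map_coeff, WittVector.coeff_mk]
          rfl
    rw [hV, hmapd]
    ring
end

section
/- Let p be a prime, A a commutative ring of characteristic p, N ⊆ A an ideal, and m, c natural numbers with N^m = 0 and m ≤ p^c. Then for every p-typical Witt vector x ∈ W(A) all of whose coefficients lie in N, one has p^c · x = 0 in W(A). In particular, the kernel of the canonical map W(A) → W(A/N) is killed by p^c, hence vanishes after tensoring with ℚ. -/
/-- **Torsion claim underlying Proposition 2.1 (i).** Let `A` be a commutative ring of
characteristic `p`, `N ⊆ A` an ideal with `N^m = 0`, and `c` with `m ≤ p^c`. Then every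
`p`-typical Witt vector all of whose coefficients lie in `N` is killed by `p^c`. -/
theorem statement7 (p : ℕ) [Fact p.Prime] (A : Type) [CommRing A] [CharP A p]
    (N : Ideal A) (m c : ℕ) (hm : N ^ m = ⊥) (hmc : m ≤ p ^ c) :
    ∀ x : WittVector p A, (∀ i : ℕ, x.coeff i ∈ N) → (p ^ c : ℕ) • x = 0 := by
  intro x hx
  have hF : WittVector.frobenius^[c] x = 0 := by
    ext i
    rw [WittVector.iterate_frobenius_coeff, WittVector.zero_coeff]
    have h1 : x.coeff i ^ p ^ c ∈ N ^ (p ^ c) := Ideal.pow_mem_pow (hx i) _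
    have h2 : N ^ (p ^ c) ≤ N ^ m := Ideal.pow_le_pow_right hmc
    simpa [hm] using h2 h1
  have key : ∀ n : ℕ, x * (p : WittVector p A) ^ n =
      WittVector.verschiebung^[n] (WittVector.frobenius^[n] x) := by
    intro n
    induction n with
    | zero => simp
    | succ n ih =>
      rw [pow_succ, ← mul_assoc, ih, ← WittVector.verschiebung_frobenius,
        Function.iterate_succ_apply', Function.iterate_succ_apply',
        (WittVector.verschiebung_frobenius_comm.symm.iterate_right n).eq]
  have : (p ^ c : ℕ) • x = x * (p : WittVector p A) ^ c := by
    rw [nsmul_eq_mul, Nat.cast_pow, mul_comm]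
  rw [this, key c, hF]
  exact Function.iterate_fixed (map_zero WittVector.verschiebung) c
end

section
/- Let p be a prime and A a commutative ring of characteristic p with a nilpotent ideal N ⊆ A. Then the canonical ring homomorphism W(A) → W(A/N), induced by the quotient map A → A/N, becomes an isomorphism after tensoring with ℚ over ℤ: the induced map W(A) ⊗_ℤ ℚ → W(A/N) ⊗_ℤ ℚ is bijective. -/
open WittVector Function

/-- **Proposition 2.1 (i), ring-level form.** Let `A` be a commutative ring of
characteristic `p` and `N ⊆ A` a nilpotent ideal. The canonical map
`W(A) → W(A/N)` becomes bijective after tensoring with `ℚ` over `ℤ`. -/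
theorem statement8 (p : ℕ) [Fact p.Prime] (A : Type) [CommRing A] [CharP A p]
    (N : Ideal A) (hN : ∃ m : ℕ, 1 ≤ m ∧ N ^ m = ⊥) :
    Function.Bijective
      (LinearMap.rTensor ℚ
        (WittVector.map (p := p) (Ideal.Quotient.mk N)).toAddMonoidHom.toIntLinearMap :
        TensorProduct ℤ (WittVector p A) ℚ → TensorProduct ℤ (WittVector p (A ⧸ N)) ℚ) := by
  obtain ⟨m, hm1, hm⟩ := hN
  have hflat : Module.Flat ℤ ℚ := IsLocalization.flat ℚ (nonZeroDivisors ℤ)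
  set f := (WittVector.map (p := p) (Ideal.Quotient.mk N)).toAddMonoidHom.toIntLinearMap with hf
  have hp2 : 1 < p := (Fact.out : p.Prime).one_lt
  -- iterated frobenius coefficients
  have hF : ∀ (k : ℕ) (y : WittVector p A) (n : ℕ),
      (frobenius^[k] y).coeff n = y.coeff n ^ p ^ k := by
    intro k
    induction k with
    | zero => simp
    | succ k ih =>
      intro y n
      rw [Function.iterate_succ_apply, ih, coeff_frobenius_charP, ← pow_mul, pow_succ']
  -- mul by p^k is V^k F^k
  have hVF : ∀ (x : WittVector p A) (k : ℕ),
      x * (p : WittVector p A) ^ k = verschiebung^[k] (frobenius^[k] x) := by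
    intro x k
    induction k with
    | zero => simp
    | succ k ih =>
      rw [pow_succ, ← mul_assoc, ih, ← verschiebung_frobenius,
        Function.iterate_succ_apply', Function.iterate_succ_apply']
      congr 1
      exact (verschiebung_frobenius_comm.iterate_left k _).symm
  -- torsion of the kernel
  have key : ∀ x : WittVector p A, f x = 0 → ((p : ℤ) ^ m) • x = 0 := by
    intro x hx
    have hcoeff : ∀ n, x.coeff n ∈ N := by
      intro n
      have := congrArg (fun y => WittVector.coeff y n) hx
      simpa [hf, WittVector.map_coeff, Ideal.Quotient.eq_zero_iff_mem] using this
    have hFx : frobenius^[m] x = 0 := by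
      ext n
      have h1 : x.coeff n ^ m = 0 := by
        have : x.coeff n ^ m ∈ N ^ m := Ideal.pow_mem_pow (hcoeff n) m
        simpa [hm] using this
      have hle : m ≤ p ^ m := le_of_lt (Nat.lt_pow_self hp2 : m < p ^ m)
      have h2 : x.coeff n ^ p ^ m = 0 := by
        rw [show p ^ m = m + (p ^ m - m) from (Nat.add_sub_cancel' hle).symm,
          pow_add, h1, zero_mul]
      simp [hF m x n, h2, WittVector.zero_coeff]
    have : x * (p : WittVector p A) ^ m = 0 := by
      rw [hVF x m, hFx]
      exact Function.iterate_fixed (by simp) m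
    rw [zsmul_eq_mul]
    push_cast
    rw [mul_comm]
    exact this
  constructor
  · -- injectivity
    rw [injective_iff_map_eq_zero]
    intro y hy
    have hexact : Function.Exact (LinearMap.ker f).subtype f := f.exact_subtype_ker_map
    have h2 := Module.Flat.rTensor_exact (M := ℚ) (R := ℤ) hexact
    have hz0 : ∀ z : TensorProduct ℤ (LinearMap.ker f) ℚ, z = 0 := by
      intro z
      induction z using TensorProduct.induction_on with
      | zero => rfl
      | tmul x q =>
        have hx : ((p : ℤ) ^ m) • x = 0 :=
          Subtype.ext (key x x.2)
        have hq : q = ((p : ℤ) ^ m) • (((p : ℚ) ^ m)⁻¹ * q) := by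
          rw [zsmul_eq_mul]
          push_cast
          rw [← mul_assoc, mul_inv_cancel₀ (by positivity), one_mul]
        rw [hq, TensorProduct.tmul_smul, TensorProduct.smul_tmul', hx,
          TensorProduct.zero_tmul]
      | add a b ha hb => rw [ha, hb, add_zero]
    obtain ⟨z, rfl⟩ := (h2 y).mp hy
    rw [hz0 z, map_zero]
  · exact LinearMap.rTensor_surjective ℚ
      (WittVector.map_surjective _ Ideal.Quotient.mk_surjective)
end

section
/- Let p be a prime, A a commutative ring of characteristic p, and I, J ⊆ A ideals. Suppose N and c are natural numbers with I^N ⊆ J and N ≤ p^c. Then for every p-typical Witt vector x ∈ W(A) all of whose coefficients lie in I, all the coefficients of the Witt vector p^c · x lie in J. -/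
open WittVector

lemma pow_smul_eq_iterate (p : ℕ) [Fact p.Prime] (A : Type) [CommRing A] [CharP A p]
    (c : ℕ) (x : WittVector p A) :
    (p ^ c : ℕ) • x = verschiebung^[c] (frobenius^[c] x) := by
  induction c with
  | zero => simp
  | succ c ih =>
    have : (p ^ (c+1) : ℕ) • x = p • ((p ^ c : ℕ) • x) := by
      rw [← mul_smul]; ring_nf
    rw [this, ih]
    have hp : p • (verschiebung^[c] (frobenius^[c] x))
        = (verschiebung^[c] (frobenius^[c] x)) * p := by
      simp [nsmul_eq_mul, mul_comm]
    rw [hp, ← verschiebung_frobenius, Function.iterate_succ_apply',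
      Function.iterate_succ_apply']
    congr 1
    exact ((verschiebung_frobenius_comm.iterate_left c) (frobenius^[c] x)).symm

lemma iterate_verschiebung_coeff_lt (p : ℕ) [Fact p.Prime] (A : Type) [CommRing A]
    (x : WittVector p A) (c i : ℕ) (h : i < c) :
    (verschiebung^[c] x).coeff i = 0 := by
  induction c generalizing i with
  | zero => omega
  | succ c ih =>
    rw [Function.iterate_succ_apply']
    cases i with
    | zero => exact verschiebung_coeff_zero _
    | succ i => rw [verschiebung_coeff_succ]; exact ih i (by omega)

/-- **Key claim of Proposition 2.1 (ii).** Let `A` be a commutative ring of characteristic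
`p`, and `I, J ⊆ A` ideals with `I^N ⊆ J` and `N ≤ p^c`. If all coefficients of a Witt
vector `x` lie in `I`, then all coefficients of `p^c • x` lie in `J`. -/
theorem statement9 (p : ℕ) [Fact p.Prime] (A : Type) [CommRing A] [CharP A p]
    (I J : Ideal A) (N c : ℕ) (hIJ : I ^ N ≤ J) (hNc : N ≤ p ^ c) :
    ∀ x : WittVector p A, (∀ i : ℕ, x.coeff i ∈ I) →
      ∀ i : ℕ, ((p ^ c : ℕ) • x).coeff i ∈ J := by
  intro x hx i
  rw [pow_smul_eq_iterate]
  rcases lt_or_ge i c with h | h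
  · rw [iterate_verschiebung_coeff_lt p A _ c i h]
    exact J.zero_mem
  · obtain ⟨k, rfl⟩ : ∃ k, i = k + c := ⟨i - c, by omega⟩
    rw [iterate_verschiebung_coeff, iterate_frobenius_coeff]
    apply hIJ
    have : I ^ (p ^ c) ≤ I ^ N := Ideal.pow_le_pow_right hNc
    exact this (Ideal.pow_mem_pow (hx k) _)
end

section
/- Let p be a prime and A a commutative ring of characteristic p, and let I, J ⊆ A be ideals with the same radical, in the sense that there exists N ≥ 1 with I^N ⊆ J and J^N ⊆ I. Write W(I) = { x ∈ W(A) : all coefficients of x lie in I }, and similarly W(J). Then the images of W(I) ⊗_ℤ ℚ and of W(J) ⊗_ℤ ℚ in W(A) ⊗_ℤ ℚ coincide; equivalently, for every x ∈ W(I) some p-power multiple of x lies in W(J), and vice versa. -/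
open WittVector in
private lemma aux10 (p : ℕ) [Fact p.Prime] {A : Type} [CommRing A] [CharP A p]
    (x : WittVector p A) (c : ℕ) : ∀ i : ℕ,
    ((p ^ c : ℕ) • x).coeff i = 0 ∨ ∃ j, ((p ^ c : ℕ) • x).coeff i = x.coeff j ^ p ^ c := by
  induction c with
  | zero => intro i; right; exact ⟨i, by simp⟩
  | succ c ih =>
      intro i
      have h : ((p ^ (c + 1) : ℕ) • x) = verschiebung (frobenius ((p ^ c : ℕ) • x)) := by
        rw [verschiebung_frobenius]
        ring
      cases i with
      | zero => left; rw [h, verschiebung_coeff_zero]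
      | succ n =>
          rw [h, verschiebung_coeff_succ, coeff_frobenius_charP]
          rcases ih n with h0 | ⟨j, hj⟩
          · left; rw [h0, zero_pow (Nat.Prime.ne_zero Fact.out)]
          · right; exact ⟨j, by rw [hj, ← pow_mul, pow_succ]⟩

private lemma aux10' (p : ℕ) [Fact p.Prime] {A : Type} [CommRing A] [CharP A p]
    (I J : Ideal A) (N : ℕ) (hN : 1 ≤ N) (hIJ : I ^ N ≤ J)
    (x : WittVector p A) (hx : ∀ i : ℕ, x.coeff i ∈ I) :
    ∃ c : ℕ, ∀ i : ℕ, ((p ^ c : ℕ) • x).coeff i ∈ J := by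
  obtain ⟨c, hc⟩ := pow_unbounded_of_one_lt N (Nat.Prime.one_lt (Fact.out : p.Prime))
  refine ⟨c, fun i => ?_⟩
  rcases aux10 p x c i with h0 | ⟨j, hj⟩
  · rw [h0]; exact J.zero_mem
  · rw [hj, ← Nat.sub_add_cancel hc.le, pow_add]
    exact J.mul_mem_left _ (hIJ (Ideal.pow_mem_pow (hx j) N))

/-- **Proposition 2.1 (ii), ring-level form.** Let `A` be a commutative ring of
characteristic `p` and `I, J ⊆ A` ideals with the same radical (there is `N ≥ 1` with
`I^N ⊆ J` and `J^N ⊆ I`). Then for every Witt vector with all coefficients in `I`, some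
`p`-power multiple of it has all coefficients in `J`, and vice versa; hence
`W(I) ⊗ ℚ` and `W(J) ⊗ ℚ` have the same image in `W(A) ⊗ ℚ`. -/
theorem statement10 (p : ℕ) [Fact p.Prime] (A : Type) [CommRing A] [CharP A p]
    (I J : Ideal A) (hrad : ∃ N : ℕ, 1 ≤ N ∧ I ^ N ≤ J ∧ J ^ N ≤ I) :
    (∀ x : WittVector p A, (∀ i : ℕ, x.coeff i ∈ I) →
        ∃ c : ℕ, ∀ i : ℕ, ((p ^ c : ℕ) • x).coeff i ∈ J) ∧
    (∀ x : WittVector p A, (∀ i : ℕ, x.coeff i ∈ J) →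
        ∃ c : ℕ, ∀ i : ℕ, ((p ^ c : ℕ) • x).coeff i ∈ I) := by
  obtain ⟨N, hN, hIJ, hJI⟩ := hrad
  exact ⟨fun x hx => aux10' p I J N hN hIJ x hx, fun x hx => aux10' p J I N hN hJI x hx⟩
end

section
/- Let p be a prime, A a commutative ring, and I, J ⊆ A ideals. Then W(I + J) = W(I) + W(J) as subgroups of W(A): every p-typical Witt vector x ∈ W(A) all of whose coefficients lie in I + J can be written as x = y + z, where all coefficients of y lie in I and all coefficients of z lie in J. -/
private lemma aux_map_zero {p : ℕ} [Fact p.Prime] {A : Type} [CommRing A] (K : Ideal A)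
    (u : WittVector p A) (h : ∀ i, u.coeff i ∈ K) :
    WittVector.map (Ideal.Quotient.mk K) u = 0 := by
  ext n
  simp [WittVector.map_coeff, Ideal.Quotient.eq_zero_iff_mem.2 (h n)]

/-- **`W(I + J) = W(I) + W(J)` (proof of Proposition 2.2).** For ideals `I, J` of a
commutative ring `A`, a Witt vector has all coefficients in `I + J` iff it is a sum
`y + z` with all coefficients of `y` in `I` and all coefficients of `z` in `J`. -/
theorem statement11 (p : ℕ) [Fact p.Prime] (A : Type) [CommRing A] (I J : Ideal A) :
    (∀ x : WittVector p A, (∀ i : ℕ, x.coeff i ∈ I + J) →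
        ∃ y z : WittVector p A,
          (∀ i : ℕ, y.coeff i ∈ I) ∧ (∀ i : ℕ, z.coeff i ∈ J) ∧ x = y + z) ∧
    (∀ y z : WittVector p A, (∀ i : ℕ, y.coeff i ∈ I) → (∀ i : ℕ, z.coeff i ∈ J) →
        ∀ i : ℕ, (y + z).coeff i ∈ I + J) := by
  constructor
  · intro x hx
    -- choose decompositions of each coefficient
    have hchoice : ∀ i : ℕ, ∃ a ∈ I, ∃ b ∈ J, x.coeff i = a + b := by
      intro i
      rcases Submodule.mem_sup.1 (by simpa [Submodule.add_eq_sup] using hx i) with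
        ⟨a, ha, b, hb, hab⟩
      exact ⟨a, ha, b, hb, hab.symm⟩
    choose a ha b hb hab using hchoice
    set y : WittVector p A := WittVector.mk p a with hy
    refine ⟨y, x - y, fun i => by simpa [hy] using ha i, ?_, by ring⟩
    -- show all coefficients of x - y are in J, by mapping to A ⧸ J
    have hmap : WittVector.map (Ideal.Quotient.mk J) (x - y) = 0 := by
      have : WittVector.map (Ideal.Quotient.mk J) x
          = WittVector.map (Ideal.Quotient.mk J) y := by
        ext n
        simp only [WittVector.map_coeff, hy, WittVector.coeff_mk]
        rw [hab n]
        simpa using Ideal.Quotient.eq_zero_iff_mem.2 (hb n)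
      rw [map_sub, this, sub_self]
    intro i
    have := congrArg (fun u => WittVector.coeff u i) hmap
    simp only [WittVector.map_coeff, WittVector.zero_coeff] at this
    exact Ideal.Quotient.eq_zero_iff_mem.1 this
  · intro y z hy hz i
    have h : WittVector.map (Ideal.Quotient.mk (I + J)) (y + z) = 0 := by
      rw [map_add,
        aux_map_zero (I + J) y (fun n => Ideal.add_eq_sup (I := I) ▸ Ideal.mem_sup_left (hy n)),
        aux_map_zero (I + J) z (fun n => Ideal.add_eq_sup (I := I) ▸ Ideal.mem_sup_right (hz n)),
        add_zero]
    have := congrArg (fun u => WittVector.coeff u i) h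
    simp only [WittVector.map_coeff, WittVector.zero_coeff] at this
    exact Ideal.Quotient.eq_zero_iff_mem.1 this
end

section
/- Let p be a prime, A a commutative ring, and I, J ⊆ A ideals. Then the sequence of abelian groups 0 → W(A/(I ∩ J)) → W(A/I) × W(A/J) → W(A/(I + J)) → 0 is exact, where the first map sends a Witt vector to the pair of its images under the canonical maps W(A/(I ∩ J)) → W(A/I) and W(A/(I ∩ J)) → W(A/J), and the second map sends a pair (u, v) to the difference of the images of u and v under the canonical maps W(A/I) → W(A/(I + J)) and W(A/J) → W(A/(I + J)). -/
open Ideal.Quotient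

lemma ringMV_inj {A : Type} [CommRing A] (I J : Ideal A) {a b : A ⧸ (I ⊓ J)}
    (h1 : factor (S := I ⊓ J) (T := I) inf_le_left a = factor (S := I ⊓ J) (T := I) inf_le_left b)
    (h2 : factor (S := I ⊓ J) (T := J) inf_le_right a = factor (S := I ⊓ J) (T := J) inf_le_right b) : a = b := by
  obtain ⟨a', rfl⟩ := Ideal.Quotient.mk_surjective a
  obtain ⟨b', rfl⟩ := Ideal.Quotient.mk_surjective b
  rw [factor_mk, factor_mk] at h1 h2
  rw [Ideal.Quotient.eq] at h1 h2 ⊢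
  exact ⟨h1, h2⟩

lemma ringMV_mid {A : Type} [CommRing A] (I J : Ideal A) (a : A ⧸ I) (b : A ⧸ J)
    (h : factor (S := I) (T := I + J) (by rw [Submodule.add_eq_sup]; exact le_sup_left) a =
      factor (S := J) (T := I + J) (by rw [Submodule.add_eq_sup]; exact le_sup_right) b) :
    ∃ c : A ⧸ (I ⊓ J), factor (S := I ⊓ J) (T := I) inf_le_left c = a ∧
      factor (S := I ⊓ J) (T := J) inf_le_right c = b := by
  obtain ⟨a', rfl⟩ := Ideal.Quotient.mk_surjective a
  obtain ⟨b', rfl⟩ := Ideal.Quotient.mk_surjective b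
  rw [factor_mk, factor_mk, Ideal.Quotient.eq, Submodule.add_eq_sup] at h
  rw [Submodule.mem_sup] at h
  obtain ⟨i, hi, j, hj, hij⟩ := h
  refine ⟨Ideal.Quotient.mk _ (a' - i), ?_, ?_⟩
  · rw [factor_mk, Ideal.Quotient.eq]
    simpa using hi
  · rw [factor_mk, Ideal.Quotient.eq]
    have : a' - i - b' = j := by linear_combination -hij
    rw [this]; exact hj

/-- **Mayer–Vietoris for Witt vectors (Proposition 2.2, affine form).** For ideals
`I, J` of a commutative ring `A`, the sequence
`0 → W(A/(I ∩ J)) → W(A/I) × W(A/J) → W(A/(I + J)) → 0`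
is exact, where the first map is induced by the canonical quotient maps and the second
sends `(u, v)` to the difference of the images of `u` and `v`. -/
theorem statement12 (p : ℕ) [Fact p.Prime] (A : Type) [CommRing A] (I J : Ideal A) :
    Function.Injective
      (fun x : WittVector p (A ⧸ (I ⊓ J)) =>
        ((WittVector.map (Ideal.Quotient.factor inf_le_left) x : WittVector p (A ⧸ I)),
          (WittVector.map (Ideal.Quotient.factor inf_le_right) x :
            WittVector p (A ⧸ J)))) ∧
    (∀ w : WittVector p (A ⧸ I) × WittVector p (A ⧸ J),
        (WittVector.map
              (Ideal.Quotient.factor (S := I) (T := I + J)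
                (by rw [Submodule.add_eq_sup]; exact le_sup_left)) w.1 -
            WittVector.map
              (Ideal.Quotient.factor (S := J) (T := I + J)
                (by rw [Submodule.add_eq_sup]; exact le_sup_right)) w.2 = 0) ↔
          ∃ x : WittVector p (A ⧸ (I ⊓ J)),
            (WittVector.map (Ideal.Quotient.factor inf_le_left) x,
              WittVector.map (Ideal.Quotient.factor inf_le_right) x) = w) ∧
    Function.Surjective
      (fun w : WittVector p (A ⧸ I) × WittVector p (A ⧸ J) =>
        WittVector.map
            (Ideal.Quotient.factor (S := I) (T := I + J)
              (by rw [Submodule.add_eq_sup]; exact le_sup_left)) w.1 -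
          WittVector.map
            (Ideal.Quotient.factor (S := J) (T := I + J)
              (by rw [Submodule.add_eq_sup]; exact le_sup_right)) w.2) := by
  refine ⟨?_, ?_, ?_⟩
  · intro x y h
    simp only [Prod.mk.injEq] at h
    ext n
    apply ringMV_inj I J
    · have := congrArg (fun z => z.coeff n) h.1
      simpa [WittVector.map_coeff] using this
    · have := congrArg (fun z => z.coeff n) h.2
      simpa [WittVector.map_coeff] using this
  · intro w
    constructor
    · intro h
      rw [sub_eq_zero] at h
      have hc : ∀ n, ∃ c : A ⧸ (I ⊓ J), factor (S := I ⊓ J) (T := I) inf_le_left c = w.1.coeff n ∧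
          factor (S := I ⊓ J) (T := J) inf_le_right c = w.2.coeff n := by
        intro n
        apply ringMV_mid
        have := congrArg (fun z => z.coeff n) h
        simpa [WittVector.map_coeff] using this
      choose c hc1 hc2 using hc
      refine ⟨WittVector.mk p c, ?_⟩
      have e1 : WittVector.map (factor (S := I ⊓ J) (T := I) inf_le_left) (WittVector.mk p c) = w.1 := by
        ext n; simpa [WittVector.map_coeff] using hc1 n
      have e2 : WittVector.map (factor (S := I ⊓ J) (T := J) inf_le_right) (WittVector.mk p c) = w.2 := by
        ext n; simpa [WittVector.map_coeff] using hc2 n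
      rw [e1, e2]
    · rintro ⟨x, rfl⟩
      rw [sub_eq_zero]
      ext n
      simp only [WittVector.map_coeff]
      obtain ⟨x', hx'⟩ := Ideal.Quotient.mk_surjective (x.coeff n)
      rw [← hx', factor_mk, factor_mk, factor_mk, factor_mk]
  · intro z
    obtain ⟨u, hu⟩ := WittVector.map_surjective
      (factor (S := I) (T := I + J) (by rw [Submodule.add_eq_sup]; exact le_sup_left))
      (fun t => by
        obtain ⟨t', rfl⟩ := Ideal.Quotient.mk_surjective t
        exact ⟨Ideal.Quotient.mk I t', factor_mk _ _⟩) z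
    exact ⟨(u, 0), by simp only [map_zero, sub_zero]; exact hu⟩
end
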